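/- Let r > 0 and let A' ⊆ ℝ² be a nonempty bounded open set. Then (|A'| − πr²)² ≤ 2π Q(A'; B_r(0)), and equality holds if and only if A' coincides, up to a set of Lebesgue measure zero, with a ball centered at the origin. -/

import Mathlib

open MeasureTheory Metric

/-- The plane `ℝ²`. -/
abbrev Plane := EuclideanSpace ℝ (Fin 2)

/-- The mass `|A|` of a set: its two-dimensional Lebesgue measure. -/
noncomputable def mass (A : Set Plane) : ℝ := (volume A).toReal

/-- The momentum `M(A) = ∫_A x dx`. -/
noncomputable def mom (A : Set Plane) : Plane := ∫ x in A, x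

/-- The angular momentum `i(A) = ∫_A |x|² dx`. -/
noncomputable def angMom (A : Set Plane) : ℝ := ∫ x in A, ‖x‖ ^ 2

/-- `Q(A; B_r(x₀)) = ∫_{A △ B_r(x₀)} | |x − x₀|² − r² | dx`. -/
noncomputable def Qfun (A : Set Plane) (x₀ : Plane) (r : ℝ) : ℝ :=
  ∫ x in symmDiff A (ball x₀ r), |‖x - x₀‖ ^ 2 - r ^ 2|

/-!
Since `‖x‖² - r²` is nonnegative exactly off `B_r`, the integral of its absolute value over
`A △ B_r` is `∫_A (‖x‖² - r²) - ∫_{B_r} (‖x‖² - r²)`, so that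
`Q(A; B_r) = i(A) - r² |A| + π r⁴ / 2`. Writing `|A| = π s²`, this is a quadratic polynomial in
`r²` and gives `2π Q(A; B_r) = (|A| - π r²)² + 2π Q(A; B_s)`. The last term is nonnegative and
vanishes iff `A` is a.e. equal to `B_s`, because the integrand of `Q(A; B_s)` vanishes only on the
null set `∂B_s`.
-/

section Radial

variable {E F : Type*} [NormedAddCommGroup E] [InnerProductSpace ℝ E] [FiniteDimensional ℝ E]
  [Nontrivial E] [MeasurableSpace E] [BorelSpace E] (μ : Measure E) [μ.IsAddHaarMeasure]
  [NormedAddCommGroup F] [NormedSpace ℝ F]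

theorem setIntegral_ball_fun_norm_addHaar (f : ℝ → F) (s : ℝ) :
    ∫ x in ball (0 : E) s, f ‖x‖ ∂μ = Module.finrank ℝ E • μ.real (ball 0 1) •
      ∫ y in Set.Ioo 0 s, y ^ (Module.finrank ℝ E - 1) • f y := by
  have hind : ∀ x : E, (ball (0 : E) s).indicator (fun x => f ‖x‖) x
      = (Set.Iio s).indicator f ‖x‖ := fun x => by
    simp only [Set.indicator, mem_ball_zero_iff, Set.mem_Iio]
  rw [← integral_indicator measurableSet_ball, funext hind,
    integral_fun_norm_addHaar μ ((Set.Iio s).indicator f)]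
  simp_rw [← Set.indicator_smul_apply (Set.Iio s) (fun y : ℝ => y ^ (Module.finrank ℝ E - 1))]
  rw [setIntegral_indicator measurableSet_Iio, Set.Ioi_inter_Iio]

end Radial

theorem mass_ball (x : Plane) {s : ℝ} (hs : 0 ≤ s) : mass (ball x s) = Real.pi * s ^ 2 := by
  simp [mass, ENNReal.toReal_ofReal hs, Real.pi_nonneg, mul_comm]

theorem angMom_ball {s : ℝ} (hs : 0 ≤ s) : angMom (ball (0 : Plane) s) = Real.pi * s ^ 4 / 2 := by
  have hdim : Module.finrank ℝ Plane = 2 := finrank_euclideanSpace_fin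
  have hunit : volume.real (ball (0 : Plane) 1) = Real.pi := by
    simpa [mass, measureReal_def] using mass_ball (0 : Plane) zero_le_one
  rw [angMom, setIntegral_ball_fun_norm_addHaar volume (· ^ 2) s, hdim, hunit,
    ← integral_Ioc_eq_integral_Ioo, ← intervalIntegral.integral_of_le hs]
  simp only [nsmul_eq_mul, smul_eq_mul, ← pow_add, Nat.reduceSub, Nat.reduceAdd, integral_pow]
  ring

theorem setIntegral_symmDiff_abs {α : Type*} [MeasurableSpace α] {μ : Measure α} {g : α → ℝ}
    {A N : Set α} (hA : MeasurableSet A) (hN : MeasurableSet N) (hgA : IntegrableOn g A μ)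
    (hgN : IntegrableOn g N μ) (hpos : ∀ x ∈ A \ N, 0 ≤ g x) (hneg : ∀ x ∈ N \ A, g x ≤ 0) :
    ∫ x in symmDiff A N, |g x| ∂μ = ∫ x in A, g x ∂μ - ∫ x in N, g x ∂μ := by
  have hind : ∀ x, (symmDiff A N).indicator (fun x => |g x|) x
      = A.indicator g x - N.indicator g x := fun x => by
    by_cases hxA : x ∈ A <;> by_cases hxN : x ∈ N
    · simp [Set.mem_symmDiff, hxA, hxN]
    · simp [Set.mem_symmDiff, hxA, hxN, abs_of_nonneg (hpos x ⟨hxA, hxN⟩)]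
    · simp [Set.mem_symmDiff, hxA, hxN, abs_of_nonpos (hneg x ⟨hxN, hxA⟩)]
    · simp [Set.mem_symmDiff, hxA, hxN]
  rw [← integral_indicator (hA.symmDiff hN), funext hind,
    integral_sub ((integrable_indicator_iff hA).2 hgA) ((integrable_indicator_iff hN).2 hgN),
    integral_indicator hA, integral_indicator hN]

theorem Continuous.integrableOn_of_isBounded {X E : Type*} [MetricSpace X] [ProperSpace X]
    [MeasurableSpace X] [OpensMeasurableSpace X] {μ : Measure X} [IsFiniteMeasureOnCompacts μ]
    [NormedAddCommGroup E] {f : X → E} (hf : Continuous f) {S : Set X}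
    (hS : Bornology.IsBounded S) : IntegrableOn f S μ :=
  (hf.continuousOn.integrableOn_compact hS.isCompact_closure).mono_set subset_closure

theorem Qfun_eq {A : Set Plane} (hA : MeasurableSet A) (hAb : Bornology.IsBounded A) {r : ℝ}
    (hr : 0 ≤ r) : Qfun A 0 r = angMom A - r ^ 2 * mass A + Real.pi * r ^ 4 / 2 := by
  have hsq : Continuous fun x : Plane => ‖x‖ ^ 2 := by fun_prop
  have hcont : Continuous fun x : Plane => ‖x‖ ^ 2 - r ^ 2 := by fun_prop
  have hintegral : ∀ {S : Set Plane}, Bornology.IsBounded S → ∫ x in S, (‖x‖ ^ 2 - r ^ 2)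
      = angMom S - r ^ 2 * mass S := fun hS => by
    rw [integral_sub (hsq.integrableOn_of_isBounded hS)
      (continuous_const.integrableOn_of_isBounded hS), setIntegral_const, smul_eq_mul,
      angMom, mass, measureReal_def, mul_comm]
  simp only [Qfun, sub_zero]
  rw [setIntegral_symmDiff_abs hA measurableSet_ball (hcont.integrableOn_of_isBounded hAb)
    (hcont.integrableOn_of_isBounded isBounded_ball), hintegral hAb, hintegral isBounded_ball,
    angMom_ball hr, mass_ball 0 hr]
  · ring
  · intro x hx
    have : r ≤ ‖x‖ := by simpa using hx.2
    nlinarith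
  · intro x hx
    have : ‖x‖ < r := by simpa using hx.1
    nlinarith [norm_nonneg x]

theorem Qfun_nonneg (A : Set Plane) (x₀ : Plane) (r : ℝ) : 0 ≤ Qfun A x₀ r :=
  setIntegral_nonneg_of_ae (.of_forall fun _ => abs_nonneg _)

theorem Qfun_eq_zero_iff {A : Set Plane} (hA : MeasurableSet A) (hAb : Bornology.IsBounded A)
    (x₀ : Plane) (r : ℝ) : Qfun A x₀ r = 0 ↔ A =ᵐ[volume] ball x₀ r := by
  have hS : MeasurableSet (symmDiff A (ball x₀ r)) := hA.symmDiff measurableSet_ball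
  rw [← measure_symmDiff_eq_zero_iff, Qfun, setIntegral_eq_zero_iff_of_nonneg_ae
    (.of_forall fun _ => abs_nonneg _) (Continuous.integrableOn_of_isBounded (by fun_prop)
      (hAb.union isBounded_ball |>.subset symmDiff_le_sup)),
    Filter.EventuallyEq, ae_restrict_iff' hS]
  constructor
  · intro h
    refine measure_eq_zero_iff_ae_notMem.2 ?_
    filter_upwards [h, measure_eq_zero_iff_ae_notMem.1 (Measure.addHaar_sphere volume x₀ |r|)]
      with x hx hsphere hxS
    refine hsphere ?_
    rw [mem_sphere_iff_norm, ← abs_norm, ← sq_eq_sq_iff_abs_eq_abs, ← sub_eq_zero]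
    simpa using hx hxS
  · intro h
    filter_upwards [measure_eq_zero_iff_ae_notMem.1 h] with x hx hxS using absurd hxS hx

theorem mass_pos_of_isOpen {A : Set Plane} (hA : IsOpen A) (hAb : Bornology.IsBounded A)
    (hAne : A.Nonempty) : 0 < mass A :=
  ENNReal.toReal_pos (hA.measure_pos volume hAne).ne' hAb.measure_lt_top.ne

/-- For `r > 0` and a nonempty bounded open set `A' ⊆ ℝ²`:
`(|A'| − πr²)² ≤ 2π Q(A'; B_r(0))`, with equality iff `A'` coincides, up to a set
of Lebesgue measure zero, with a ball centered at the origin. -/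
theorem stmt6 (r : ℝ) (hr : 0 < r) (A' : Set Plane) (hA : IsOpen A')
    (hAb : Bornology.IsBounded A') (hAne : A'.Nonempty) :
    (mass A' - Real.pi * r ^ 2) ^ 2 ≤ 2 * Real.pi * Qfun A' 0 r ∧
      ((mass A' - Real.pi * r ^ 2) ^ 2 = 2 * Real.pi * Qfun A' 0 r ↔
        ∃ s : ℝ, 0 < s ∧ A' =ᵐ[volume] ball (0 : Plane) s) := by
  have hAm := hA.measurableSet
  have hAπ : 0 < mass A' / Real.pi := div_pos (mass_pos_of_isOpen hA hAb hAne) Real.pi_pos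
  set s := √(mass A' / Real.pi) with hs
  have hs0 : 0 < s := Real.sqrt_pos.2 hAπ
  have hmass : mass A' = Real.pi * s ^ 2 := by
    rw [hs, Real.sq_sqrt hAπ.le, mul_div_cancel₀ _ Real.pi_ne_zero]
  have hdecomp : 2 * Real.pi * Qfun A' 0 r
      = (mass A' - Real.pi * r ^ 2) ^ 2 + 2 * Real.pi * Qfun A' 0 s := by
    rw [Qfun_eq hAm hAb hr.le, Qfun_eq hAm hAb hs0.le, hmass]
    ring
  refine ⟨hdecomp ▸ le_add_of_nonneg_right (mul_nonneg (by positivity) (Qfun_nonneg A' 0 s)), ?_⟩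
  rw [hdecomp, left_eq_add, mul_eq_zero, or_iff_right (by positivity), Qfun_eq_zero_iff hAm hAb]
  refine ⟨fun h => ⟨s, hs0, h⟩, fun ⟨t, ht, hAt⟩ => ?_⟩
  have : s = t := by
    rw [hs, mass, measure_congr hAt, ← mass, mass_ball 0 ht.le,
      mul_div_cancel_left₀ _ Real.pi_ne_zero, Real.sqrt_sq ht.le]
  exact this ▸ hAt
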